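/- arXiv:0712.1171 — 3 statements merged into one kernel-verified Lean document; each statement's English description precedes it below -/
import Mathlib

section
/- Let γ be a specification on a finite-spin product space Ω, μ ∈ 𝒢(γ), and suppose μ = α ν + (1-α) ν̄ with α ∈ (0,1). Then ν ∈ 𝒢(γ) if and only if the Radon–Nikodym density f = dν/dμ is measurable with respect to the tail σ-algebra ℱ_∞ (up to μ-modification). -/
/-!
Write `ν = f μ` (possible since `αν ≤ μ`). If `ν` is Gibbs, then for every finite `Λ` the
density `f` agrees `μ`-a.e. with its `γ_Λ`-average `ω ↦ ∫ f dγ_Λ(ω)`, because `γ_Λ` is a version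
of the conditional expectation given `ℱ_{Λᶜ}` under the Gibbs measure `μ`; these averages are
`ℱ_{Λᶜ}`-measurable, and their limit superior along a cofinal sequence of volumes is a single
tail-measurable version of `f`. Conversely, a tail-measurable density is `ℱ_{Λᶜ}`-measurable for
every `Λ`, so it can be pulled out of `γ_Λ`, and `μγ_Λ = μ` gives `(fμ)γ_Λ = fμ`.
-/

open MeasureTheory
open scoped ENNReal

/-- A specification: a family `γ = (γ_Λ)_{Λ finite}` of proper probability
kernels from `(Ω, ℱ_{Λᶜ})` to `(Ω, ℱ)` satisfying the consistency condition
`γ_Λ γ_{Λ'} = γ_Λ` for `Λ' ⊆ Λ`. -/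
structure Specification (E S : Type*) [MeasurableSpace E] where
  ker : Finset S → (S → E) → Measure (S → E)
  isProb : ∀ (Λ : Finset S) (ω : S → E), IsProbabilityMeasure (ker Λ ω)
  meas : ∀ (Λ : Finset S) (A : Set (S → E)), MeasurableSet A →
    Measurable[MeasureTheory.cylinderEvents ((↑Λ : Set S)ᶜ)] (fun ω => ker Λ ω A)
  proper : ∀ (Λ : Finset S) (ω : S → E) (B : Set (S → E)),
    MeasurableSet[MeasureTheory.cylinderEvents ((↑Λ : Set S)ᶜ)] B →
      ker Λ ω B = B.indicator (fun _ => (1 : ℝ≥0∞)) ω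
  consistent : ∀ (Λ' Λ : Finset S), Λ' ⊆ Λ → ∀ (ω : S → E) (A : Set (S → E)),
    MeasurableSet A → ∫⁻ ω', ker Λ' ω' A ∂(ker Λ ω) = ker Λ ω A

/-- `μ ∈ 𝒢(γ)`: the probability measure `μ` is consistent with (specified by)
the specification `γ`, i.e. `μ γ_Λ = μ` for all finite `Λ`. -/
def IsGibbsFor {E S : Type*} [MeasurableSpace E] (γ : Specification E S)
    (μ : Measure (S → E)) : Prop :=
  IsProbabilityMeasure μ ∧ ∀ (Λ : Finset S) (A : Set (S → E)), MeasurableSet A →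
    ∫⁻ ω, γ.ker Λ ω A ∂μ = μ A

/-- The tail σ-algebra `ℱ_∞ = ⋂_{Λ finite} ℱ_{Λᶜ}`. -/
def tailSigma (E S : Type*) [MeasurableSpace E] : MeasurableSpace (S → E) :=
  ⨅ Λ : Finset S, MeasureTheory.cylinderEvents ((↑Λ : Set S)ᶜ)

open Filter

namespace Specification

variable {E S : Type*} [MeasurableSpace E] (γ : Specification E S)

theorem measurable_ker (Λ : Finset S) :
    Measurable[cylinderEvents ((↑Λ : Set S)ᶜ)] (γ.ker Λ) :=
  Measure.measurable_of_measurable_coe _ (γ.meas Λ)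

theorem measurable_lintegral_ker (Λ : Finset S) {k : (S → E) → ℝ≥0∞} (hk : Measurable k) :
    Measurable[cylinderEvents ((↑Λ : Set S)ᶜ)] (fun ω => ∫⁻ η, k η ∂γ.ker Λ ω) :=
  (Measure.measurable_lintegral hk).comp (γ.measurable_ker Λ)

/-- Properness: `γ_Λ(ω, ·)` is the Dirac mass at `ω` on `ℱ_{Λᶜ}`. -/
theorem ae_ker_eq_self_of_measurable (Λ : Finset S) (ω : S → E) {k : (S → E) → ℝ≥0∞}
    (hk : Measurable[cylinderEvents ((↑Λ : Set S)ᶜ)] k) :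
    ∀ᵐ η ∂γ.ker Λ ω, k η = k ω := by
  have hB : MeasurableSet[cylinderEvents ((↑Λ : Set S)ᶜ)] (k ⁻¹' {k ω})ᶜ :=
    (hk (measurableSet_singleton _)).compl
  change γ.ker Λ ω (k ⁻¹' {k ω})ᶜ = 0
  rw [γ.proper Λ ω _ hB]
  simp

theorem lintegral_ker_mul (Λ : Finset S) (ω : S → E) {k m : (S → E) → ℝ≥0∞}
    (hk : Measurable[cylinderEvents ((↑Λ : Set S)ᶜ)] k) (hm : Measurable m) :
    ∫⁻ η, k η * m η ∂γ.ker Λ ω = k ω * ∫⁻ η, m η ∂γ.ker Λ ω := by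
  rw [← lintegral_const_mul _ hm]
  exact lintegral_congr_ae <| (γ.ae_ker_eq_self_of_measurable Λ ω hk).mono fun η hη => by
    simp only [hη]

end Specification

namespace IsGibbsFor

variable {E S : Type*} [MeasurableSpace E] {γ : Specification E S} {μ : Measure (S → E)}

theorem bind_ker (hμ : IsGibbsFor γ μ) (Λ : Finset S) : μ.bind (γ.ker Λ) = μ :=
  Measure.ext fun A hA => by
    rw [Measure.bind_apply hA ((γ.measurable_ker Λ).mono cylinderEvents_le_pi le_rfl).aemeasurable,
      hμ.2 Λ A hA]

/-- `∫ m dγ_Λ(·)` is a version of the conditional expectation of `m` given `ℱ_{Λᶜ}` under `μ`. -/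
theorem lintegral_mul_lintegral_ker (hμ : IsGibbsFor γ μ) (Λ : Finset S)
    {k m : (S → E) → ℝ≥0∞} (hk : Measurable[cylinderEvents ((↑Λ : Set S)ᶜ)] k)
    (hm : Measurable m) :
    ∫⁻ ω, k ω * ∫⁻ η, m η ∂γ.ker Λ ω ∂μ = ∫⁻ ω, k ω * m ω ∂μ := by
  have hkm : Measurable fun ω => k ω * m ω := (hk.mono cylinderEvents_le_pi le_rfl).mul hm
  calc ∫⁻ ω, k ω * ∫⁻ η, m η ∂γ.ker Λ ω ∂μ
      = ∫⁻ ω, ∫⁻ η, k η * m η ∂γ.ker Λ ω ∂μ := by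
        simp only [γ.lintegral_ker_mul Λ _ hk hm]
    _ = ∫⁻ ω, k ω * m ω ∂μ := by
        rw [← Measure.lintegral_bind
          ((γ.measurable_ker Λ).mono cylinderEvents_le_pi le_rfl).aemeasurable hkm.aemeasurable,
          hμ.bind_ker Λ]

theorem lintegral_mul_ker_apply (hμ : IsGibbsFor γ μ) (Λ : Finset S)
    {k : (S → E) → ℝ≥0∞} (hk : Measurable[cylinderEvents ((↑Λ : Set S)ᶜ)] k)
    {A : Set (S → E)} (hA : MeasurableSet A) :
    ∫⁻ ω, k ω * γ.ker Λ ω A ∂μ = ∫⁻ ω in A, k ω ∂μ := by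
  have h := hμ.lintegral_mul_lintegral_ker Λ hk (measurable_one.indicator hA)
  simp_rw [lintegral_indicator_one hA] at h
  rw [h, ← lintegral_indicator hA]
  simp_rw [← Set.indicator_mul_right, Pi.one_apply, mul_one]

theorem ae_eq_lintegral_ker (hμ : IsGibbsFor γ μ) {f : (S → E) → ℝ≥0∞} (hf : Measurable f)
    (hν : IsGibbsFor γ (μ.withDensity f)) (Λ : Finset S) :
    f =ᵐ[μ] fun ω => ∫⁻ η, f η ∂γ.ker Λ ω := by
  have := hμ.1
  refine ae_eq_of_forall_setLIntegral_eq_of_sigmaFinite hf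
    ((γ.measurable_lintegral_ker Λ hf).mono cylinderEvents_le_pi le_rfl) fun A hA _ => ?_
  have hγA := γ.meas Λ A hA
  calc ∫⁻ ω in A, f ω ∂μ = ∫⁻ ω, γ.ker Λ ω A ∂μ.withDensity f := by
        rw [hν.2 Λ A hA, withDensity_apply _ hA]
    _ = ∫⁻ ω, γ.ker Λ ω A * f ω ∂μ := by
        rw [lintegral_withDensity_eq_lintegral_mul _ hf (hγA.mono cylinderEvents_le_pi le_rfl)]
        simp only [Pi.mul_apply, mul_comm]
    _ = ∫⁻ ω, (∫⁻ η, f η ∂γ.ker Λ ω) * γ.ker Λ ω A ∂μ := by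
        rw [← hμ.lintegral_mul_lintegral_ker Λ hγA hf]
        simp only [mul_comm]
    _ = ∫⁻ ω in A, ∫⁻ η, f η ∂γ.ker Λ ω ∂μ :=
        hμ.lintegral_mul_ker_apply Λ (γ.measurable_lintegral_ker Λ hf) hA

theorem of_eq_withDensity (hμ : IsGibbsFor γ μ) {ν : Measure (S → E)} [IsProbabilityMeasure ν]
    {g : (S → E) → ℝ≥0∞} (hg : Measurable[tailSigma E S] g) (hν : ν = μ.withDensity g) :
    IsGibbsFor γ ν := by
  have hg_cyl (Λ : Finset S) : Measurable[cylinderEvents ((↑Λ : Set S)ᶜ)] g :=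
    hg.mono (iInf_le _ Λ) le_rfl
  refine ⟨inferInstance, fun Λ A hA => ?_⟩
  rw [hν, withDensity_apply _ hA, lintegral_withDensity_eq_lintegral_mul _
    ((hg_cyl ∅).mono cylinderEvents_le_pi le_rfl)
    ((γ.meas Λ A hA).mono cylinderEvents_le_pi le_rfl)]
  exact hμ.lintegral_mul_ker_apply Λ (hg_cyl Λ) hA

end IsGibbsFor

/-- The limit superior of the versions `h n` serves as a common version, measurable for every
`m k` because it only depends on the tail `(h (n + k))ₙ`. -/
theorem exists_measurable_iInf_ae_eq_of_antitone {Ω : Type*} [MeasurableSpace Ω] {μ : Measure Ω}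
    {m : ℕ → MeasurableSpace Ω} (hm : Antitone m) {f : Ω → ℝ≥0∞} {h : ℕ → Ω → ℝ≥0∞}
    (hh : ∀ n, Measurable[m n] (h n)) (hf : ∀ n, f =ᵐ[μ] h n) :
    ∃ g : Ω → ℝ≥0∞, Measurable[⨅ n, m n] g ∧ f =ᵐ[μ] g := by
  refine ⟨fun ω => limsup (fun n => h n ω) atTop, ?_, ?_⟩
  · refine measurable_iff_comap_le.2 (le_iInf fun k => measurable_iff_comap_le.1 ?_)
    rw [funext fun ω => (limsup_nat_add (fun n => h n ω) k).symm]
    exact Measurable.limsup fun n => (hh (n + k)).mono (hm (Nat.le_add_left k n)) le_rfl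
  · filter_upwards [ae_all_iff.2 hf] with ω hω
    rw [show (fun n => h n ω) = fun _ => f ω from funext fun n => (hω n).symm, limsup_const]

theorem exists_measurable_iInf_ae_eq {ι Ω : Type*} [Preorder ι] [Nonempty ι] [IsDirectedOrder ι]
    [(atTop : Filter ι).IsCountablyGenerated] [MeasurableSpace Ω] {μ : Measure Ω}
    {m : ι → MeasurableSpace Ω} (hm : Antitone m) {f : Ω → ℝ≥0∞} {h : ι → Ω → ℝ≥0∞}
    (hh : ∀ i, Measurable[m i] (h i)) (hf : ∀ i, f =ᵐ[μ] h i) :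
    ∃ g : Ω → ℝ≥0∞, Measurable[⨅ i, m i] g ∧ f =ᵐ[μ] g := by
  obtain ⟨u, hu_mono, hu⟩ := exists_seq_monotone_tendsto_atTop_atTop ι
  obtain ⟨g, hg, hfg⟩ :=
    exists_measurable_iInf_ae_eq_of_antitone (hm.comp_monotone hu_mono) (fun n => hh (u n))
      (fun n => hf (u n))
  refine ⟨g, hg.mono (le_iInf fun i => ?_) le_rfl, hfg⟩
  obtain ⟨n, hn⟩ := (tendsto_atTop.1 hu i).exists
  exact iInf_le_of_le n (hm hn)

theorem consistent_iff_density_tail_measurable_general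
    {E S : Type*} [MeasurableSpace E] [Countable S]
    (γ : Specification E S) (μ ν ν' : MeasureTheory.Measure (S → E))
    [MeasureTheory.IsProbabilityMeasure ν]
    (hμ : IsGibbsFor γ μ) (α : ℝ≥0∞) (h0 : 0 < α)
    (hconv : μ = α • ν + (1 - α) • ν') :
    IsGibbsFor γ ν ↔
      ∃ g : (S → E) → ℝ≥0∞, Measurable[tailSigma E S] g ∧ ν.rnDeriv μ =ᵐ[μ] g := by
  have := hμ.1
  have hνμ : ν ≪ μ := hconv ▸ (Measure.absolutelyContinuous_smul h0.ne').add_right _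
  have hν : μ.withDensity (ν.rnDeriv μ) = ν := Measure.withDensity_rnDeriv_eq ν μ hνμ
  constructor
  · intro hνG
    exact exists_measurable_iInf_ae_eq (fun _ _ hΛ => cylinderEvents_mono
        (Set.compl_subset_compl.2 (Finset.coe_subset.2 hΛ)))
      (fun Λ => γ.measurable_lintegral_ker Λ (Measure.measurable_rnDeriv ν μ))
      (hμ.ae_eq_lintegral_ker (Measure.measurable_rnDeriv ν μ) (by rwa [hν]))
  · rintro ⟨g, hg, hfg⟩
    exact hμ.of_eq_withDensity hg (hν ▸ withDensity_congr_ae hfg)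

/-- Let `μ ∈ 𝒢(γ)` and `μ = αν + (1-α)ν'` with `α ∈ (0,1)`. Then
`ν ∈ 𝒢(γ)` iff the Radon–Nikodym density `dν/dμ` is, up to a
`μ`-modification, measurable with respect to the tail σ-algebra `ℱ_∞`. -/
theorem consistent_iff_density_tail_measurable
    {E S : Type*} [Fintype E] [MeasurableSpace E] [Countable S]
    (γ : Specification E S) (μ ν ν' : MeasureTheory.Measure (S → E))
    [MeasureTheory.IsProbabilityMeasure ν] [MeasureTheory.IsProbabilityMeasure ν']
    (hμ : IsGibbsFor γ μ) (α : ℝ≥0∞) (h0 : 0 < α) (h1 : α < 1)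
    (hconv : μ = α • ν + (1 - α) • ν') :
    IsGibbsFor γ ν ↔
      ∃ g : (S → E) → ℝ≥0∞, Measurable[tailSigma E S] g ∧ ν.rnDeriv μ =ᵐ[μ] g :=
  consistent_iff_density_tail_measurable_general γ μ ν ν' hμ α h0 hconv
end

section
/- Let γ be a non-null quasilocal specification on Ω = E^S with E finite, fix a reference configuration '+', and define the vacuum potential Φ⁺_A(σ) = -Σ_{B⊆A} (-1)^{|A∖B|} log(γ_B(σ|+)/γ_B(+|+)) for finite A. Then Φ⁺ satisfies the vacuum condition: Φ⁺_A(σ) = 0 whenever σ_i = +_i for some i ∈ A. -/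
/-!
Fix a site `i ∈ A` with `σ i = + i`. By locality and consistency of the specification, the
ratio `γ_B(σ|+) / γ_B(+|+)` does not change when `i` is added to `B ∌ i`: both `σ_B +` and
`σ_{B ∪ {i}} +` are the same configuration `η`, and consistency says that
`γ_B(η|η) / γ_B(+|+)` is independent of `B` among the sets outside of which `η` and `+` agree.
The terms of the alternating sum defining `Φ⁺_A(σ)` therefore cancel in pairs `B`, `B ∪ {i}`.
-/

/-- The concatenated configuration `σ_Λ ω_{Λᶜ}`. -/
noncomputable def extendIn {E S : Type*} [DecidableEq S] (Λ : Finset S)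
    (σ : ↥Λ → E) (ω : S → E) : S → E :=
  fun i => if h : i ∈ Λ then σ ⟨i, h⟩ else ω i

/-- The vacuum potential with vacuum state `+` associated to a specification
with single-configuration weights `γ_B(σ|ω)` (the probability of the
configuration `σ_B ω_{Bᶜ}` under `γ_B(·|ω)`):
`Φ⁺_A(σ) = -Σ_{B ⊆ A} (-1)^{|A∖B|} log (γ_B(σ|+) / γ_B(+|+))`. -/
noncomputable def vacuumPot {E S : Type*} [DecidableEq S]
    (γ : Finset S → (S → E) → (S → E) → ℝ) (plus : S → E)
    (A : Finset S) (σ : S → E) : ℝ :=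
  -∑ B ∈ A.powerset,
    (-1 : ℝ) ^ ((A \ B).card) * Real.log (γ B σ plus / γ B plus plus)

open Finset

namespace Finset

theorem sum_powerset_neg_one_pow_card_sdiff_mul_eq_zero {α R : Type*} [DecidableEq α]
    [CommRing R] {A : Finset α} {i : α} (hi : i ∈ A) (f : Finset α → R)
    (hf : ∀ B ⊆ A.erase i, f (insert i B) = f B) :
    ∑ B ∈ A.powerset, (-1 : R) ^ #(A \ B) * f B = 0 := by
  have hiA : i ∉ A.erase i := notMem_erase i A
  rw [← insert_erase hi, sum_powerset_insert hiA, ← sum_add_distrib]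
  refine sum_eq_zero fun B hB => ?_
  have hBA : B ⊆ A.erase i := mem_powerset.1 hB
  have hiB : i ∉ B := fun h => hiA (hBA h)
  rw [insert_sdiff_of_notMem _ hiB, insert_sdiff_insert, sdiff_insert_of_notMem hiA,
    card_insert_of_notMem fun h => hiA (mem_sdiff.1 h).1, hf B hBA, pow_succ]
  ring

end Finset

section Specification

variable {E S : Type*} {γ : Finset S → (S → E) → (S → E) → ℝ}

theorem weight_div_weight_eq_of_subset
    (hcons : ∀ (B B2 : Finset S), B ⊆ B2 → ∀ ω ω2 : S → E,
      (∀ i ∉ B, ω i = ω2 i) →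
        γ B2 ω2 ω2 * γ B ω ω = γ B ω2 ω2 * γ B2 ω ω)
    {B B2 : Finset S} (hB : B ⊆ B2) {ω η : S → E} (hη : ∀ i ∉ B, ω i = η i)
    (hω : γ B ω ω ≠ 0) (hω2 : γ B2 ω ω ≠ 0) :
    γ B2 η η / γ B2 ω ω = γ B η η / γ B ω ω :=
  (div_eq_div_iff hω2 hω).2 (hcons B B2 hB ω η hη)

variable [DecidableEq S]

theorem weight_eq_weight_piecewise
    (hdepσ : ∀ (B : Finset S) (σ σ2 ω : S → E), (∀ i ∈ B, σ i = σ2 i) →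
      γ B σ ω = γ B σ2 ω)
    (hdepω : ∀ (B : Finset S) (σ ω ω2 : S → E), (∀ i ∉ B, ω i = ω2 i) →
      γ B σ ω = γ B σ ω2)
    (B : Finset S) (σ ω : S → E) :
    γ B σ ω = γ B (B.piecewise σ ω) (B.piecewise σ ω) := by
  rw [hdepσ B σ (B.piecewise σ ω) ω fun j hj => (piecewise_eq_of_mem _ _ _ hj).symm,
    hdepω B _ ω _ fun j hj => (piecewise_eq_of_notMem _ _ _ hj).symm]

theorem weight_insert_div_weight_eq
    (hpos : ∀ (B : Finset S) (σ ω : S → E), 0 < γ B σ ω)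
    (hdepσ : ∀ (B : Finset S) (σ σ2 ω : S → E), (∀ i ∈ B, σ i = σ2 i) →
      γ B σ ω = γ B σ2 ω)
    (hdepω : ∀ (B : Finset S) (σ ω ω2 : S → E), (∀ i ∉ B, ω i = ω2 i) →
      γ B σ ω = γ B σ ω2)
    (hcons : ∀ (B B2 : Finset S), B ⊆ B2 → ∀ ω ω2 : S → E,
      (∀ i ∉ B, ω i = ω2 i) →
        γ B2 ω2 ω2 * γ B ω ω = γ B ω2 ω2 * γ B2 ω ω)
    {B : Finset S} {i : S} (hiB : i ∉ B) {σ ω : S → E} (hσi : σ i = ω i) :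
    γ (insert i B) σ ω / γ (insert i B) ω ω = γ B σ ω / γ B ω ω := by
  have hpiecewise : (insert i B).piecewise σ ω = B.piecewise σ ω := by
    rw [piecewise_insert, Function.update_eq_self_iff, piecewise_eq_of_notMem _ _ _ hiB, hσi]
  rw [weight_eq_weight_piecewise hdepσ hdepω (insert i B) σ ω, hpiecewise,
    weight_eq_weight_piecewise hdepσ hdepω B σ ω]
  exact weight_div_weight_eq_of_subset hcons (subset_insert i B)
    (fun j hj => (piecewise_eq_of_notMem _ _ _ hj).symm) (hpos _ _ _).ne' (hpos _ _ _).ne'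

end Specification

theorem vacuum_potential_vacuum_condition_general
    {E S : Type*} [DecidableEq S]
    (γ : Finset S → (S → E) → (S → E) → ℝ) (plus : S → E)
    (hpos : ∀ (B : Finset S) (σ ω : S → E), 0 < γ B σ ω)
    (hdepσ : ∀ (B : Finset S) (σ σ2 ω : S → E), (∀ i ∈ B, σ i = σ2 i) →
      γ B σ ω = γ B σ2 ω)
    (hdepω : ∀ (B : Finset S) (σ ω ω2 : S → E), (∀ i ∉ B, ω i = ω2 i) →
      γ B σ ω = γ B σ ω2)
    (hcons : ∀ (B B2 : Finset S), B ⊆ B2 → ∀ ω ω2 : S → E,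
      (∀ i ∉ B, ω i = ω2 i) →
        γ B2 ω2 ω2 * γ B ω ω = γ B ω2 ω2 * γ B2 ω ω) :
    ∀ (A : Finset S) (σ : S → E), (∃ i ∈ A, σ i = plus i) →
      vacuumPot γ plus A σ = 0 := by
  rintro A σ ⟨i, hiA, hσi⟩
  rw [vacuumPot, neg_eq_zero]
  refine sum_powerset_neg_one_pow_card_sdiff_mul_eq_zero hiA _ fun B hB => ?_
  rw [weight_insert_div_weight_eq hpos hdepσ hdepω hcons (fun h => notMem_erase i A (hB h)) hσi]

/-- For a non-null quasilocal specification `γ` (described here by its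
single-configuration weights, with positivity, properness/locality,
normalization, consistency of the densities `f_B(ω) = γ_B(ω|ω)`, and
quasilocality), the vacuum potential `Φ⁺` with vacuum state `+` satisfies
the vacuum condition: `Φ⁺_A(σ) = 0` whenever `σ_i = +_i` for some `i ∈ A`. -/
theorem vacuum_potential_vacuum_condition
    {E S : Type*} [Fintype E] [Nonempty E] [TopologicalSpace E]
    [DiscreteTopology E] [DecidableEq S] [Countable S]
    (γ : Finset S → (S → E) → (S → E) → ℝ) (plus : S → E)
    (hpos : ∀ (B : Finset S) (σ ω : S → E), 0 < γ B σ ω)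
    (hdepσ : ∀ (B : Finset S) (σ σ2 ω : S → E), (∀ i ∈ B, σ i = σ2 i) →
      γ B σ ω = γ B σ2 ω)
    (hdepω : ∀ (B : Finset S) (σ ω ω2 : S → E), (∀ i ∉ B, ω i = ω2 i) →
      γ B σ ω = γ B σ ω2)
    (hnorm : ∀ (B : Finset S) (ω : S → E),
      ∑ σ : ↥B → E, γ B (extendIn B σ ω) ω = 1)
    (hcons : ∀ (B B2 : Finset S), B ⊆ B2 → ∀ ω ω2 : S → E,
      (∀ i ∉ B, ω i = ω2 i) →
        γ B2 ω2 ω2 * γ B ω ω = γ B ω2 ω2 * γ B2 ω ω)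
    (hql : ∀ (B : Finset S) (σ : S → E), Continuous (fun ω : S → E => γ B σ ω)) :
    ∀ (A : Finset S) (σ : S → E), (∃ i ∈ A, σ i = plus i) →
      vacuumPot γ plus A σ = 0 :=
  vacuum_potential_vacuum_condition_general γ plus hpos hdepσ hdepω hcons
end

section
/- For a non-null quasilocal specification γ on Ω = E^S (E finite) with vacuum potential Φ⁺ (vacuum state +), the Moebius-inverted free-boundary Hamiltonian satisfies H_B^{Φ⁺,f}(σ) := Σ_{A⊆B} Φ⁺_A(σ) = -log(γ_B(σ|+)/γ_B(+|+)) for every finite B, and moreover for any site i ∈ B, H_B^{Φ⁺,f}(σ_{B∖i} +_i ·) = H_{B∖i}^{Φ⁺,f} evaluated at the corresponding configuration (the Hamiltonian is insensitive to sites where σ agrees with +). -/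
open Finset

section Moebius

variable {α R : Type*} [DecidableEq α] [CommRing R]

theorem sum_powerset_insert_neg_one_pow_sdiff {a : α} {A : Finset α} (ha : a ∉ A)
    (f : Finset α → R) :
    ∑ C ∈ (insert a A).powerset, (-1 : R) ^ #(insert a A \ C) * f C
      = ∑ C ∈ A.powerset, (-1 : R) ^ #(A \ C) * (f (insert a C) - f C) := by
  rw [sum_powerset_insert ha, ← sum_add_distrib]
  refine sum_congr rfl fun C hC => ?_
  have haC : a ∉ C := fun h => ha (mem_powerset.mp hC h)
  rw [insert_sdiff_of_notMem A haC, card_insert_of_notMem (by simp [ha]),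
    insert_sdiff_insert, sdiff_insert_of_notMem ha]
  ring

theorem sum_powerset_sum_powerset_neg_one_pow_sdiff (B : Finset α) (f : Finset α → R) :
    ∑ A ∈ B.powerset, ∑ C ∈ A.powerset, (-1 : R) ^ #(A \ C) * f C = f B := by
  induction B using Finset.induction_on generalizing f with
  | empty => simp
  | insert a B ha ih =>
    have hsub : ∀ A ∈ B.powerset, a ∉ A := fun A hA h => ha (mem_powerset.mp hA h)
    rw [sum_powerset_insert ha, ih,
      sum_congr rfl fun A hA => sum_powerset_insert_neg_one_pow_sdiff (hsub A hA) f,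
      ih fun C => f (insert a C) - f C]
    ring

end Moebius

section Specification

variable {E S : Type*} [DecidableEq S] {γ : Finset S → (S → E) → (S → E) → ℝ}

theorem vacuum_ratio_eq_of_subset (plus : S → E)
    (hpos : ∀ (B : Finset S) (σ ω : S → E), 0 < γ B σ ω)
    (hdepσ : ∀ (B : Finset S) (σ σ2 ω : S → E), (∀ i ∈ B, σ i = σ2 i) →
      γ B σ ω = γ B σ2 ω)
    (hdepω : ∀ (B : Finset S) (σ ω ω2 : S → E), (∀ i ∉ B, ω i = ω2 i) →
      γ B σ ω = γ B σ ω2)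
    (hcons : ∀ (B B2 : Finset S), B ⊆ B2 → ∀ ω ω2 : S → E,
      (∀ i ∉ B, ω i = ω2 i) →
        γ B2 ω2 ω2 * γ B ω ω = γ B ω2 ω2 * γ B2 ω ω)
    {C D : Finset S} (hCD : C ⊆ D) (σ : S → E) (hσ : ∀ i ∈ D \ C, σ i = plus i) :
    γ D σ plus / γ D plus plus = γ C σ plus / γ C plus plus := by
  -- With `ω = σ_C +_{Cᶜ}`, both `γ_C(σ|+)` and `γ_D(σ|+)` are diagonal values
  -- `γ_B(ω|ω)`, which consistency relates to `γ_B(+|+)`.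
  set ω := C.piecewise σ plus
  have hoff : ∀ i ∉ C, plus i = ω i := fun i hi =>
    (C.piecewise_eq_of_notMem σ plus hi).symm
  have hγ : ∀ B, C ⊆ B → (∀ i ∈ B, σ i = ω i) → γ B σ plus = γ B ω ω :=
    fun B hCB hon => by
      rw [hdepσ B σ ω plus hon, hdepω B ω plus ω fun i hi => hoff i fun h => hi (hCB h)]
  have honD : ∀ i ∈ D, σ i = ω i := fun i hi => by
    by_cases hiC : i ∈ C
    · exact (C.piecewise_eq_of_mem σ plus hiC).symm
    · rw [hσ i (mem_sdiff.mpr ⟨hi, hiC⟩), hoff i hiC]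
  rw [hγ D hCD honD, hγ C subset_rfl fun i hi => honD i (hCD hi),
    div_eq_div_iff (hpos D plus plus).ne' (hpos C plus plus).ne']
  exact hcons C D hCD plus ω hoff

end Specification

theorem vacuum_hamiltonian_free_boundary_general
    {E S : Type*} [DecidableEq S]
    (γ : Finset S → (S → E) → (S → E) → ℝ) (plus : S → E)
    (hpos : ∀ (B : Finset S) (σ ω : S → E), 0 < γ B σ ω)
    (hdepσ : ∀ (B : Finset S) (σ σ2 ω : S → E), (∀ i ∈ B, σ i = σ2 i) →
      γ B σ ω = γ B σ2 ω)
    (hdepω : ∀ (B : Finset S) (σ ω ω2 : S → E), (∀ i ∉ B, ω i = ω2 i) →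
      γ B σ ω = γ B σ ω2)
    (hcons : ∀ (B B2 : Finset S), B ⊆ B2 → ∀ ω ω2 : S → E,
      (∀ i ∉ B, ω i = ω2 i) →
        γ B2 ω2 ω2 * γ B ω ω = γ B ω2 ω2 * γ B2 ω ω) :
    (∀ (B : Finset S) (σ : S → E),
      ∑ A ∈ B.powerset, vacuumPot γ plus A σ
        = -Real.log (γ B σ plus / γ B plus plus)) ∧
    (∀ (B : Finset S), ∀ i ∈ B, ∀ σ : S → E, σ i = plus i →
      ∑ A ∈ B.powerset, vacuumPot γ plus A σ
        = ∑ A ∈ (B.erase i).powerset, vacuumPot γ plus A σ) := by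
  have hamiltonian : ∀ (B : Finset S) (σ : S → E),
      ∑ A ∈ B.powerset, vacuumPot γ plus A σ = -Real.log (γ B σ plus / γ B plus plus) :=
    fun B σ => by
      simp only [vacuumPot, sum_neg_distrib, sum_powerset_sum_powerset_neg_one_pow_sdiff B
        fun C => Real.log (γ C σ plus / γ C plus plus)]
  refine ⟨hamiltonian, fun B i hi σ hσi => ?_⟩
  rw [hamiltonian, hamiltonian,
    vacuum_ratio_eq_of_subset plus hpos hdepσ hdepω hcons (erase_subset i B) σ
      (by simpa [sdiff_erase_self hi] using hσi)]

/-- For a non-null quasilocal specification `γ` with vacuum potential `Φ⁺`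
(vacuum state `+`), the Moebius-inverted free-boundary Hamiltonian satisfies
`H_B^{Φ⁺,f}(σ) = Σ_{A ⊆ B} Φ⁺_A(σ) = -log (γ_B(σ|+)/γ_B(+|+))` for every
finite `B`, and the Hamiltonian is insensitive to sites where `σ` agrees
with `+`: if `i ∈ B` and `σ_i = +_i` then
`H_B^{Φ⁺,f}(σ) = H_{B∖i}^{Φ⁺,f}(σ)`. -/
theorem vacuum_hamiltonian_free_boundary
    {E S : Type*} [Fintype E] [Nonempty E] [TopologicalSpace E]
    [DiscreteTopology E] [DecidableEq S] [Countable S]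
    (γ : Finset S → (S → E) → (S → E) → ℝ) (plus : S → E)
    (hpos : ∀ (B : Finset S) (σ ω : S → E), 0 < γ B σ ω)
    (hdepσ : ∀ (B : Finset S) (σ σ2 ω : S → E), (∀ i ∈ B, σ i = σ2 i) →
      γ B σ ω = γ B σ2 ω)
    (hdepω : ∀ (B : Finset S) (σ ω ω2 : S → E), (∀ i ∉ B, ω i = ω2 i) →
      γ B σ ω = γ B σ ω2)
    (hnorm : ∀ (B : Finset S) (ω : S → E),
      ∑ σ : ↥B → E, γ B (extendIn B σ ω) ω = 1)
    (hcons : ∀ (B B2 : Finset S), B ⊆ B2 → ∀ ω ω2 : S → E,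
      (∀ i ∉ B, ω i = ω2 i) →
        γ B2 ω2 ω2 * γ B ω ω = γ B ω2 ω2 * γ B2 ω ω)
    (hql : ∀ (B : Finset S) (σ : S → E), Continuous (fun ω : S → E => γ B σ ω)) :
    (∀ (B : Finset S) (σ : S → E),
      ∑ A ∈ B.powerset, vacuumPot γ plus A σ
        = -Real.log (γ B σ plus / γ B plus plus)) ∧
    (∀ (B : Finset S), ∀ i ∈ B, ∀ σ : S → E, σ i = plus i →
      ∑ A ∈ B.powerset, vacuumPot γ plus A σ
        = ∑ A ∈ (B.erase i).powerset, vacuumPot γ plus A σ) :=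
  vacuum_hamiltonian_free_boundary_general γ plus hpos hdepσ hdepω hcons
end
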